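/- arXiv:2309.00940 — 3 statements merged into one kernel-verified Lean document; each statement's English description precedes it below -/
import Mathlib

section
/- There exist finite sets of content points and utility functions such that the no-prompting best-response dynamics with collapsing beliefs converges to an equilibrium whose social welfare is an arbitrarily small fraction of the optimum. Concretely: for every ε > 0 there exist two points {1,2}, true utilities E₁ > E₂ > 0 with E₂/E₁ < ε, and initial estimates f₁, f₂ with f₂ > E₁ > E₂ > f₁, such that the best-response dynamics (choose argmax of current estimate, then collapse estimate of chosen point to its true value) converges to point 2 and never visits point 1. -/
/-!
Initially the low-utility point 2 looks better than everything and point 1 looks worse than the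
true utility of point 2. Selecting point 2 only collapses its estimate down to its true utility,
which still beats the untouched, too pessimistic estimate of point 1; so point 1 is never
selected and its (much larger) utility is never discovered.
-/

section BestResponse

variable {ι : Type*}

def IsArgmaxSelector (pick : (ι → ℝ) → ι) : Prop :=
  ∀ (g : ι → ℝ) (j : ι), g j ≤ g (pick g)

def IsCollapsingTrajectory [DecidableEq ι] (E : ι → ℝ) (pick : (ι → ℝ) → ι)
    (g : ℕ → ι → ℝ) : Prop :=
  ∀ t, g (t + 1) = Function.update (g t) (pick (g t)) (E (pick (g t)))

theorem IsArgmaxSelector.pick_ne_of_lt {pick : (ι → ℝ) → ι} (hpick : IsArgmaxSelector pick)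
    {g : ι → ℝ} {i j : ι} (h : g i < g j) : pick g ≠ i := by
  rintro rfl
  exact (hpick g j).not_gt h

namespace IsCollapsingTrajectory

variable [DecidableEq ι] {E : ι → ℝ} {pick : (ι → ℝ) → ι} {g : ℕ → ι → ℝ}

/-- The estimate of `j` only ever takes the values `g 0 j` and `E j`. -/
theorem estimate_invariant (hpick : IsArgmaxSelector pick) (hg : IsCollapsingTrajectory E pick g)
    {i j : ι} (hf : g 0 i < g 0 j) (hE : g 0 i < E j) (t : ℕ) :
    g t i = g 0 i ∧ min (g 0 j) (E j) ≤ g t j := by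
  induction t with
  | zero => exact ⟨rfl, min_le_left _ _⟩
  | succ t ih =>
    obtain ⟨hi, hj⟩ := ih
    have hpick_ne : pick (g t) ≠ i :=
      hpick.pick_ne_of_lt (lt_of_lt_of_le (hi ▸ lt_min hf hE) hj)
    refine ⟨by rw [hg t, Function.update_of_ne hpick_ne.symm, hi], ?_⟩
    rw [hg t]
    by_cases hj' : j = pick (g t)
    · subst hj'
      simpa only [Function.update_self] using min_le_right _ _
    · rwa [Function.update_of_ne hj']

theorem pick_ne (hpick : IsArgmaxSelector pick) (hg : IsCollapsingTrajectory E pick g)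
    {i j : ι} (hf : g 0 i < g 0 j) (hE : g 0 i < E j) (t : ℕ) : pick (g t) ≠ i := by
  obtain ⟨hi, hj⟩ := estimate_invariant hpick hg hf hE t
  exact hpick.pick_ne_of_lt (lt_of_lt_of_le (hi ▸ lt_min hf hE) hj)

end IsCollapsingTrajectory

end BestResponse

/-- No-prompting best-response dynamics can converge to an equilibrium with
arbitrarily small fraction of the optimal welfare. -/
theorem stmt3 : ∀ ε : ℝ, ε > 0 →
    ∃ E f : Fin 2 → ℝ, E 0 > E 1 ∧ E 1 > 0 ∧ E 1 / E 0 < ε ∧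
      f 1 > E 0 ∧ E 1 > f 0 ∧
      ∀ (pick : (Fin 2 → ℝ) → Fin 2), (∀ (g : Fin 2 → ℝ) (j : Fin 2), g j ≤ g (pick g)) →
        ∀ (g : ℕ → Fin 2 → ℝ), g 0 = f →
          (∀ t, g (t + 1) = Function.update (g t) (pick (g t)) (E (pick (g t)))) →
          ∀ t, pick (g t) = 1 := by
  intro ε hε
  obtain ⟨δ, hδ0, hδ1, hδε⟩ : ∃ δ : ℝ, 0 < δ ∧ δ < 1 ∧ δ < ε :=
    ⟨min (ε / 2) (1 / 2), by positivity,
      (min_le_right _ _).trans_lt (by norm_num), (min_le_left _ _).trans_lt (half_lt_self hε)⟩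
  refine ⟨![1, δ], ![δ / 2, 2], hδ1, hδ0, by simpa using hδε, by norm_num,
    by simpa using half_lt_self hδ0, ?_⟩
  intro pick hpick g hg0 hstep t
  refine Fin.eq_one_of_ne_zero _ (IsCollapsingTrajectory.pick_ne (j := 1) hpick hstep ?_ ?_ t)
  · simp only [hg0, Matrix.cons_val_zero, Matrix.cons_val_one]
    linarith
  · simpa [hg0] using half_lt_self hδ0
end

section
/- Let (X_s) be i.i.d. Rademacher random variables (each +1 or −1 with probability 1/2) and let (Y_t) be i.i.d. random variables taking value +1 with probability 3/4 and −2 with probability 1/4. Then for every integer k ≥ 1, the hitting time inf{t : Σ_{t'≤t} Y_{t'} ≥ k} is stochastically dominated by inf{s : Σ_{s'≤s} X_{s'} ≥ k}, i.e., there exists a coupling under which the Y-walk reaches level k no later than the X-walk. -/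
open MeasureTheory ProbabilityTheory

/-- Rademacher law on ℤ: ±1 with probability 1/2 each. -/
noncomputable def radLaw : MeasureTheory.Measure ℤ :=
  (1/2 : ENNReal) • MeasureTheory.Measure.dirac 1 +
  (1/2 : ENNReal) • MeasureTheory.Measure.dirac (-1)

/-- Law of the Y-walk increments: +1 with probability 3/4, −2 with probability 1/4. -/
noncomputable def yLaw : MeasureTheory.Measure ℤ :=
  (3/4 : ENNReal) • MeasureTheory.Measure.dirac 1 +
  (1/4 : ENNReal) • MeasureTheory.Measure.dirac (-2)

/-- First time the partial sums of `Z` reach level `k` (⊤ if never). -/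
noncomputable def hitTime (Z : ℕ → ℤ) (k : ℤ) : ℕ∞ :=
  sInf ((fun t : ℕ => (t : ℕ∞)) '' {t : ℕ | k ≤ ∑ i ∈ Finset.range (t + 1), Z i})

namespace Stmt5Aux

noncomputable def P : Measure ℝ := volume.restrict (Set.Ico 0 1)

noncomputable def T (x : ℝ) : ℝ := Int.fract (4 * x)

noncomputable def dig (x : ℝ) : ℤ := ⌊4 * x⌋

def Bset (c : ℤ) : Set ℝ := {x | dig x = c}

lemma measurable_dig : Measurable dig :=
  Int.measurable_floor.comp (measurable_id.const_mul 4)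

lemma measurable_T : Measurable T :=
  measurable_fract.comp (measurable_id.const_mul 4)

lemma measurableSet_Bset (c : ℤ) : MeasurableSet (Bset c) :=
  measurable_dig (by trivial : MeasurableSet {c})

instance : IsProbabilityMeasure P := by
  constructor
  rw [P, Measure.restrict_apply_univ, Real.volume_Ico]
  norm_num

lemma mem_Bset_iff {c : ℤ} {x : ℝ} : x ∈ Bset c ↔ (c : ℝ) ≤ 4 * x ∧ 4 * x < c + 1 := by
  simp only [Bset, Set.mem_setOf_eq, dig, Int.floor_eq_iff]

lemma Bset_subset {c : ℤ} (h0 : 0 ≤ c) (h3 : c < 4) : Bset c ⊆ Set.Ico 0 1 := by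
  intro x hx
  rw [mem_Bset_iff] at hx
  constructor
  · nlinarith [hx.1, show (0:ℝ) ≤ (c:ℝ) by exact_mod_cast h0]
  · nlinarith [hx.2, show (c:ℝ) + 1 ≤ 4 by exact_mod_cast h3]

lemma P_inter_Bset {c : ℤ} (h0 : 0 ≤ c) (h3 : c < 4) {A : Set ℝ} (hA : MeasurableSet A) :
    P (A ∩ Bset c) = volume (A ∩ Bset c) := by
  rw [P, Measure.restrict_apply (hA.inter (measurableSet_Bset c))]
  congr 1
  exact Set.inter_eq_self_of_subset_left (le_trans Set.inter_subset_right (Bset_subset h0 h3))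

/-- The key renewal identity. -/
lemma key {c : ℤ} (h0 : 0 ≤ c) (h3 : c < 4) {A : Set ℝ} (hA : MeasurableSet A) :
    P (T ⁻¹' A ∩ Bset c) = 4⁻¹ * P A := by
  have hset : T ⁻¹' A ∩ Bset c
      = (fun x : ℝ => 4 * x) ⁻¹' ((fun y : ℝ => y + (-(c:ℝ))) ⁻¹' (A ∩ Set.Ico 0 1)) := by
    ext x
    simp only [Set.mem_inter_iff, Set.mem_preimage, mem_Bset_iff, Set.mem_Ico, Set.mem_preimage]
    constructor
    · rintro ⟨hTA, h1, h2⟩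
      have hT : T x = 4 * x + -(c:ℝ) := by
        have : dig x = c := by
          simp only [dig, Int.floor_eq_iff]
          push_cast; exact ⟨h1, h2⟩
        simp only [T, Int.fract]
        have : (⌊4*x⌋ : ℝ) = (c : ℝ) := by exact_mod_cast this
        rw [this]; ring
      refine ⟨by rwa [← hT], by linarith, by linarith⟩
    · rintro ⟨hTA, h1, h2⟩
      have hdig : dig x = c := by
        simp only [dig, Int.floor_eq_iff]
        push_cast
        constructor <;> linarith
      have hT : T x = 4 * x + -(c:ℝ) := by
        simp only [T, Int.fract]
        have : (⌊4*x⌋ : ℝ) = (c : ℝ) := by exact_mod_cast hdig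
        rw [this]; ring
      exact ⟨by rwa [hT], by linarith, by linarith⟩
  rw [P_inter_Bset h0 h3 (measurable_T hA), hset]
  rw [Real.volume_preimage_mul_left (by norm_num : (4:ℝ) ≠ 0)]
  rw [measure_preimage_add_right volume (-(c:ℝ)) _]
  have : ENNReal.ofReal |(4:ℝ)⁻¹| = 4⁻¹ := by
    rw [abs_of_pos (by norm_num : (0:ℝ) < 4⁻¹)]
    rw [ENNReal.ofReal_inv_of_pos (by norm_num : (0:ℝ) < 4)]
    norm_num
  rw [this, P, Measure.restrict_apply hA]

lemma P_Bset {c : ℤ} (h0 : 0 ≤ c) (h3 : c < 4) : P (Bset c) = 4⁻¹ := by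
  have := key h0 h3 (MeasurableSet.univ (α := ℝ))
  simpa using this

lemma split4 {A : Set ℝ} (hA : MeasurableSet A) :
    P A = P (A ∩ Bset 0) + P (A ∩ Bset 1) + P (A ∩ Bset 2) + P (A ∩ Bset 3) := by
  have hd : ∀ c c' : ℤ, c ≠ c' → Disjoint (A ∩ Bset c) (A ∩ Bset c') := by
    intro c c' hcc
    rw [Set.disjoint_left]
    rintro x ⟨-, hx⟩ ⟨-, hx'⟩
    exact hcc (hx.symm.trans hx' : c = c')
  have hmem : ∀ x ∈ Set.Ico (0:ℝ) 1, dig x = 0 ∨ dig x = 1 ∨ dig x = 2 ∨ dig x = 3 := by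
    rintro x ⟨h0, h1⟩
    have hl : (0:ℤ) ≤ dig x := by
      rw [dig, Int.le_floor]; push_cast; linarith
    have hu : dig x < 4 := by
      rw [dig, Int.floor_lt]; push_cast; linarith
    omega
  have hsub : A ∩ Set.Ico 0 1 ⊆ (A ∩ Bset 0) ∪ (A ∩ Bset 1) ∪ (A ∩ Bset 2) ∪ (A ∩ Bset 3) := by
    rintro x ⟨hxA, hxI⟩
    rcases hmem x hxI with h | h | h | h <;>
      simp [Set.mem_union, hxA, Bset, Set.mem_setOf_eq, h]
  have hPA : P A = volume (A ∩ Set.Ico 0 1) := by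
    rw [P, Measure.restrict_apply hA]
  have hle : P A ≤ P (A ∩ Bset 0) + P (A ∩ Bset 1) + P (A ∩ Bset 2) + P (A ∩ Bset 3) := by
    calc P A = volume (A ∩ Set.Ico 0 1) := hPA
    _ ≤ volume ((A ∩ Bset 0) ∪ (A ∩ Bset 1) ∪ (A ∩ Bset 2) ∪ (A ∩ Bset 3)) :=
        measure_mono hsub
    _ ≤ volume (A ∩ Bset 0) + volume (A ∩ Bset 1) + volume (A ∩ Bset 2) + volume (A ∩ Bset 3) :=
        le_trans (measure_union_le _ _) (by
          refine add_le_add ?_ le_rfl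
          refine le_trans (measure_union_le _ _) ?_
          refine add_le_add ?_ le_rfl
          exact measure_union_le _ _)
    _ = P (A ∩ Bset 0) + P (A ∩ Bset 1) + P (A ∩ Bset 2) + P (A ∩ Bset 3) := by
        rw [P_inter_Bset (by norm_num) (by norm_num) hA, P_inter_Bset (by norm_num) (by norm_num) hA,
          P_inter_Bset (by norm_num) (by norm_num) hA, P_inter_Bset (by norm_num) (by norm_num) hA]
  have hge : P (A ∩ Bset 0) + P (A ∩ Bset 1) + P (A ∩ Bset 2) + P (A ∩ Bset 3) ≤ P A := by
    have h01 : P (A ∩ Bset 0) + P (A ∩ Bset 1) = P ((A ∩ Bset 0) ∪ (A ∩ Bset 1)) :=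
      (measure_union (hd 0 1 (by norm_num)) (hA.inter (measurableSet_Bset 1))).symm
    have h012 : P ((A ∩ Bset 0) ∪ (A ∩ Bset 1)) + P (A ∩ Bset 2)
        = P ((A ∩ Bset 0) ∪ (A ∩ Bset 1) ∪ (A ∩ Bset 2)) := by
      refine (measure_union ?_ (hA.inter (measurableSet_Bset 2))).symm
      exact Set.disjoint_union_left.2 ⟨hd 0 2 (by norm_num), hd 1 2 (by norm_num)⟩
    have h0123 : P ((A ∩ Bset 0) ∪ (A ∩ Bset 1) ∪ (A ∩ Bset 2)) + P (A ∩ Bset 3)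
        = P ((A ∩ Bset 0) ∪ (A ∩ Bset 1) ∪ (A ∩ Bset 2) ∪ (A ∩ Bset 3)) := by
      refine (measure_union ?_ (hA.inter (measurableSet_Bset 3))).symm
      exact Set.disjoint_union_left.2 ⟨Set.disjoint_union_left.2
        ⟨hd 0 3 (by norm_num), hd 1 3 (by norm_num)⟩, hd 2 3 (by norm_num)⟩
    rw [h01, h012, h0123]
    exact measure_mono (by
      refine Set.union_subset (Set.union_subset (Set.union_subset ?_ ?_) ?_) ?_ <;>
        exact Set.inter_subset_left)
  exact le_antisymm hle hge


noncomputable def Xf : ℕ → ℝ → ℤ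
  | 0, x => if dig x ≤ 1 then 1 else -1
  | 1, x => if dig x ≤ 1 then Xf 0 (T x) else if dig x = 2 then 1 else -1
  | (n+2), x => if dig x ≤ 1 then Xf (n+1) (T x) else Xf n (T x)

noncomputable def Yf (t : ℕ) (x : ℝ) : ℤ := if dig (T^[t] x) = 3 then -2 else 1

lemma xf0_low {x : ℝ} (h : dig x ≤ 1) : Xf 0 x = 1 := by simp [Xf, h]
lemma xf0_high {x : ℝ} (h : ¬ dig x ≤ 1) : Xf 0 x = -1 := by simp [Xf, h]
lemma xf1_high {x : ℝ} (h : ¬ dig x ≤ 1) : Xf 1 x = if dig x = 2 then 1 else -1 := by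
  simp [Xf, h]
lemma xfsucc_low {x : ℝ} (h : dig x ≤ 1) (n : ℕ) : Xf (n+1) x = Xf n (T x) := by
  cases n <;> simp [Xf, h]
lemma xfsucc2_high {x : ℝ} (h : ¬ dig x ≤ 1) (n : ℕ) : Xf (n+2) x = Xf n (T x) := by
  simp [Xf, h]
lemma yf0 (x : ℝ) : Yf 0 x = if dig x = 3 then -2 else 1 := by rfl
lemma yfsucc (t : ℕ) (x : ℝ) : Yf (t+1) x = Yf t (T x) := by
  rfl

lemma msetOf (p : ℤ → Prop) {f : ℝ → ℤ} (hf : Measurable f) :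
    MeasurableSet {x : ℝ | p (f x)} :=
  hf (show MeasurableSet {z : ℤ | p z} from trivial)

lemma measurable_Xf (n : ℕ) : Measurable (Xf n) := by
  induction n using Nat.strong_induction_on with
  | _ n IH =>
    match n with
    | 0 =>
      exact Measurable.ite (msetOf (· ≤ 1) measurable_dig) measurable_const measurable_const
    | 1 =>
      refine Measurable.ite (msetOf (· ≤ 1) measurable_dig) ((IH 0 (by omega)).comp measurable_T) ?_
      exact Measurable.ite (msetOf (· = 2) measurable_dig) measurable_const measurable_const
    | (n+2) =>
      exact Measurable.ite (msetOf (· ≤ 1) measurable_dig)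
        ((IH (n+1) (by omega)).comp measurable_T) ((IH n (by omega)).comp measurable_T)

lemma measurable_Yf (t : ℕ) : Measurable (Yf t) := by
  exact Measurable.ite (msetOf (· = 3) (measurable_dig.comp (measurable_T.iterate t)))
    measurable_const measurable_const

lemma xf_values (n : ℕ) (x : ℝ) : Xf n x = 1 ∨ Xf n x = -1 := by
  induction n using Nat.strong_induction_on generalizing x with
  | _ n IH =>
    match n with
    | 0 => by_cases h : dig x ≤ 1 <;> simp [Xf, h]
    | 1 =>
      by_cases h : dig x ≤ 1
      · rw [xfsucc_low h]; exact IH 0 (by omega) _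
      · rw [xf1_high h]; split <;> simp
    | (n+2) =>
      by_cases h : dig x ≤ 1
      · rw [xfsucc_low h]; exact IH (n+1) (by omega) _
      · rw [xfsucc2_high h]; exact IH n (by omega) _

lemma law_apply (p q : ENNReal) (a b z : ℤ) :
    (p • Measure.dirac a + q • Measure.dirac b) {z}
      = (if z = a then p else 0) + (if z = b then q else 0) := by
  simp only [Measure.coe_add, Measure.coe_smul, Pi.add_apply, Pi.smul_apply, smul_eq_mul,
    Measure.dirac_apply' _ (measurableSet_singleton z), Set.indicator_apply,
    Set.mem_singleton_iff, Pi.one_apply]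
  rcases eq_or_ne a z with h|h <;> rcases eq_or_ne b z with h'|h'
  · subst h; subst h'; simp
  · subst h; simp [h', Ne.symm h']
  · subst h'; simp [h, Ne.symm h]
  · simp [h, h', Ne.symm h, Ne.symm h']

lemma radLaw_singleton (z : ℤ) :
    radLaw {z} = if z = 1 then 2⁻¹ else if z = -1 then 2⁻¹ else 0 := by
  rw [radLaw, law_apply]
  rcases eq_or_ne z 1 with h | h <;> rcases eq_or_ne z (-1) with h' | h' <;>
    simp [h, h', one_div] <;> omega

lemma yLaw_singleton (z : ℤ) :
    yLaw {z} = if z = 1 then 3/4 else if z = -2 then 4⁻¹ else 0 := by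
  rw [yLaw, law_apply]
  rcases eq_or_ne z 1 with h | h <;> rcases eq_or_ne z (-2) with h' | h' <;>
    simp [h, h', one_div] <;> omega

instance : IsProbabilityMeasure radLaw := by
  constructor
  rw [radLaw]
  simp only [Measure.coe_add, Measure.coe_smul, Pi.add_apply, Pi.smul_apply, smul_eq_mul,
    measure_univ, mul_one]
  rw [ENNReal.div_add_div_same, ENNReal.div_eq_one_iff (by norm_num) (by norm_num)]
  norm_num

instance : IsProbabilityMeasure yLaw := by
  constructor
  rw [yLaw]
  simp only [Measure.coe_add, Measure.coe_smul, Pi.add_apply, Pi.smul_apply, smul_eq_mul,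
    measure_univ, mul_one]
  rw [ENNReal.div_add_div_same, ENNReal.div_eq_one_iff (by norm_num) (by norm_num)]
  norm_num

lemma forall_lt_succ {P : ℕ → Prop} {n : ℕ} :
    (∀ i < n + 1, P i) ↔ P 0 ∧ ∀ i < n, P (i + 1) := by
  constructor
  · exact fun h => ⟨h 0 (Nat.succ_pos n), fun i hi => h (i+1) (by omega)⟩
  · rintro ⟨h0, h⟩ i hi
    cases i with
    | zero => exact h0
    | succ j => exact h j (by omega)


def EX (n : ℕ) (w : ℕ → ℤ) : Set ℝ := {x | ∀ i < n, Xf i x = w i}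
def EY (n : ℕ) (w : ℕ → ℤ) : Set ℝ := {x | ∀ i < n, Yf i x = w i}

lemma setX_low {m : ℕ} {w : ℕ → ℤ} {c : ℤ} (hc : c ≤ 1) :
    EX (m+1) w ∩ Bset c =
      if w 0 = 1 then T ⁻¹' EX m (fun i => w (i+1)) ∩ Bset c else ∅ := by
  split_ifs with hw
  · ext x
    simp only [EX, Set.mem_inter_iff, Set.mem_setOf_eq, Set.mem_preimage, Bset]
    constructor
    · rintro ⟨hall, hdx⟩
      have hlow : dig x ≤ 1 := hdx ▸ hc
      exact ⟨fun i hi => by rw [← xfsucc_low hlow i]; exact hall (i+1) (by omega), hdx⟩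
    · rintro ⟨hall, hdx⟩
      have hlow : dig x ≤ 1 := hdx ▸ hc
      refine ⟨fun i hi => ?_, hdx⟩
      cases i with
      | zero => rw [xf0_low hlow, hw]
      | succ j => rw [xfsucc_low hlow]; exact hall j (by omega)
  · ext x
    simp only [EX, Set.mem_inter_iff, Set.mem_setOf_eq, Set.mem_empty_iff_false, iff_false,
      not_and, Bset]
    intro hall hdx
    exact hw ((xf0_low (hdx ▸ hc)).symm.trans (hall 0 (by omega))).symm

lemma setX1_high {w : ℕ → ℤ} {c : ℤ} (hc : ¬ c ≤ 1) :
    EX 1 w ∩ Bset c = if w 0 = -1 then Bset c else ∅ := by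
  split_ifs with hw
  · ext x
    simp only [EX, Set.mem_inter_iff, Set.mem_setOf_eq, Bset]
    constructor
    · exact fun h => h.2
    · intro hdx
      refine ⟨fun i hi => ?_, hdx⟩
      interval_cases i
      rw [xf0_high (hdx ▸ hc), hw]
  · ext x
    simp only [EX, Set.mem_inter_iff, Set.mem_setOf_eq, Set.mem_empty_iff_false, iff_false,
      not_and, Bset]
    intro hall hdx
    exact hw ((xf0_high (hdx ▸ hc)).symm.trans (hall 0 (by omega))).symm

lemma setX_high {m : ℕ} {w : ℕ → ℤ} {c : ℤ} (hc : ¬ c ≤ 1) :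
    EX (m+2) w ∩ Bset c =
      if w 0 = -1 ∧ w 1 = (if c = 2 then 1 else -1) then
        T ⁻¹' EX m (fun i => w (i+2)) ∩ Bset c else ∅ := by
  by_cases hw : w 0 = -1 ∧ w 1 = (if c = 2 then 1 else -1)
  · rw [if_pos hw]
    ext x
    simp only [EX, Set.mem_inter_iff, Set.mem_setOf_eq, Set.mem_preimage, Bset]
    constructor
    · rintro ⟨hall, hdx⟩
      have hhigh : ¬ dig x ≤ 1 := hdx ▸ hc
      exact ⟨fun i hi => by rw [← xfsucc2_high hhigh i]; exact hall (i+2) (by omega), hdx⟩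
    · rintro ⟨hall, hdx⟩
      have hhigh : ¬ dig x ≤ 1 := hdx ▸ hc
      refine ⟨fun i hi => ?_, hdx⟩
      match i with
      | 0 => rw [xf0_high hhigh]; exact hw.1.symm
      | 1 => rw [xf1_high hhigh, hdx]; exact hw.2.symm
      | (j+2) => rw [xfsucc2_high hhigh]; exact hall j (by omega)
  · rw [if_neg hw]
    ext x
    simp only [EX, Set.mem_inter_iff, Set.mem_setOf_eq, Set.mem_empty_iff_false, iff_false,
      not_and, Bset]
    intro hall hdx
    have hhigh : ¬ dig x ≤ 1 := hdx ▸ hc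
    refine hw ⟨((xf0_high hhigh).symm.trans (hall 0 (by omega))).symm, ?_⟩
    rw [← hall 1 (by omega), xf1_high hhigh, hdx]

lemma setY {m : ℕ} {w : ℕ → ℤ} {c : ℤ} :
    EY (m+1) w ∩ Bset c =
      if w 0 = (if c = 3 then -2 else 1) then
        T ⁻¹' EY m (fun i => w (i+1)) ∩ Bset c else ∅ := by
  by_cases hw : w 0 = (if c = 3 then -2 else 1)
  · rw [if_pos hw]
    ext x
    simp only [EY, Set.mem_inter_iff, Set.mem_setOf_eq, Set.mem_preimage, Bset]
    constructor
    · rintro ⟨hall, hdx⟩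
      exact ⟨fun i hi => by rw [← yfsucc]; exact hall (i+1) (by omega), hdx⟩
    · rintro ⟨hall, hdx⟩
      refine ⟨fun i hi => ?_, hdx⟩
      cases i with
      | zero => rw [yf0, hdx]; exact hw.symm
      | succ j => rw [yfsucc]; exact hall j (by omega)
  · rw [if_neg hw]
    ext x
    simp only [EY, Set.mem_inter_iff, Set.mem_setOf_eq, Set.mem_empty_iff_false, iff_false,
      not_and, Bset]
    intro hall hdx
    refine hw ?_
    rw [← hall 0 (by omega), yf0, hdx]


lemma measurableSet_EX (n : ℕ) (w : ℕ → ℤ) : MeasurableSet (EX n w) := by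
  have h : EX n w = ⋂ i ∈ Finset.range n, Xf i ⁻¹' {w i} := by
    ext x; simp [EX]
  rw [h]
  exact MeasurableSet.biInter (Finset.range n).countable_toSet
    (fun i _ => measurable_Xf i (show MeasurableSet {w i} from trivial))

lemma measurableSet_EY (n : ℕ) (w : ℕ → ℤ) : MeasurableSet (EY n w) := by
  have h : EY n w = ⋂ i ∈ Finset.range n, Yf i ⁻¹' {w i} := by
    ext x; simp [EY]
  rw [h]
  exact MeasurableSet.biInter (Finset.range n).countable_toSet
    (fun i _ => measurable_Yf i (show MeasurableSet {w i} from trivial))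

lemma EX_zero (w : ℕ → ℤ) : EX 0 w = Set.univ := by
  ext x; simp [EX]

lemma EY_zero (w : ℕ → ℤ) : EY 0 w = Set.univ := by
  ext x; simp [EY]

lemma inv4_add_inv4 : (4:ENNReal)⁻¹ + 4⁻¹ = 2⁻¹ := by
  have h4 : (4:ENNReal) = 2 * 2 := by norm_num
  have : (4:ENNReal)⁻¹ = 2⁻¹ * 2⁻¹ := by
    rw [h4, ENNReal.mul_inv (Or.inl (by norm_num)) (Or.inl (by norm_num))]
  rw [this, ← add_mul, ENNReal.inv_two_add_inv_two, one_mul]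

lemma inv2_mul_inv2 : (2:ENNReal)⁻¹ * 2⁻¹ = 4⁻¹ := by
  have h4 : (4:ENNReal) = 2 * 2 := by norm_num
  rw [h4, ENNReal.mul_inv (Or.inl (by norm_num)) (Or.inl (by norm_num))]

lemma three_inv4 : (4:ENNReal)⁻¹ + 4⁻¹ + 4⁻¹ = 3/4 := by
  rw [div_eq_mul_inv]
  ring

lemma setX_high2 {m : ℕ} {w : ℕ → ℤ} :
    EX (m+2) w ∩ Bset 2 =
      if w 0 = -1 ∧ w 1 = 1 then T ⁻¹' EX m (fun i => w (i+2)) ∩ Bset 2 else ∅ := by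
  rw [setX_high (by norm_num), if_pos rfl]

lemma setX_high3 {m : ℕ} {w : ℕ → ℤ} :
    EX (m+2) w ∩ Bset 3 =
      if w 0 = -1 ∧ w 1 = -1 then T ⁻¹' EX m (fun i => w (i+2)) ∩ Bset 3 else ∅ := by
  rw [setX_high (by norm_num), if_neg (by norm_num : ¬ (3:ℤ) = 2)]

lemma setY_ne3 {m : ℕ} {w : ℕ → ℤ} {c : ℤ} (hc : c ≠ 3) :
    EY (m+1) w ∩ Bset c =
      if w 0 = 1 then T ⁻¹' EY m (fun i => w (i+1)) ∩ Bset c else ∅ := by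
  rw [setY, if_neg hc]

lemma setY_3 {m : ℕ} {w : ℕ → ℤ} :
    EY (m+1) w ∩ Bset 3 =
      if w 0 = -2 then T ⁻¹' EY m (fun i => w (i+1)) ∩ Bset 3 else ∅ := by
  rw [setY, if_pos rfl]

lemma prefix_law_Y (n : ℕ) (w : ℕ → ℤ) :
    P (EY n w) = ∏ i ∈ Finset.range n, yLaw {w i} := by
  induction n generalizing w with
  | zero => simp [EY_zero]
  | succ m IH =>
    rw [split4 (measurableSet_EY (m+1) w),
      setY_ne3 (by norm_num), setY_ne3 (by norm_num), setY_ne3 (by norm_num), setY_3,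
      Finset.prod_range_succ' (fun i => yLaw {w i}) m]
    have hkey : ∀ c : ℤ, 0 ≤ c → c < 4 →
        P (T ⁻¹' EY m (fun i => w (i+1)) ∩ Bset c) = 4⁻¹ * P (EY m (fun i => w (i+1))) :=
      fun c h0 h3 => key h0 h3 (measurableSet_EY m _)
    rcases eq_or_ne (w 0) 1 with hw | hw
    · rw [if_pos hw, if_pos hw, if_pos hw, if_neg (by rw [hw]; norm_num)]
      rw [hkey 0 (by norm_num) (by norm_num), hkey 1 (by norm_num) (by norm_num),
        hkey 2 (by norm_num) (by norm_num), IH, measure_empty, add_zero,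
        hw, yLaw_singleton]
      simp only [if_true]
      rw [← add_mul, ← add_mul, three_inv4, mul_comm]
    · rcases eq_or_ne (w 0) (-2) with hw' | hw'
      · rw [if_neg hw, if_neg hw, if_neg hw, if_pos hw']
        rw [hkey 3 (by norm_num) (by norm_num), IH, measure_empty, hw', yLaw_singleton]
        norm_num
        rw [mul_comm]
      · rw [if_neg hw, if_neg hw, if_neg hw, if_neg hw']
        rw [yLaw_singleton, if_neg hw, if_neg hw']
        simp

lemma prefix_law_X (n : ℕ) (w : ℕ → ℤ) :
    P (EX n w) = ∏ i ∈ Finset.range n, radLaw {w i} := by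
  induction n using Nat.strong_induction_on generalizing w with
  | _ n IH =>
    match n with
    | 0 => simp [EX_zero]
    | 1 =>
      rw [split4 (measurableSet_EX 1 w),
        setX_low (by norm_num : (0:ℤ) ≤ 1), setX_low (by norm_num : (1:ℤ) ≤ 1),
        setX1_high (by norm_num : ¬ (2:ℤ) ≤ 1), setX1_high (by norm_num : ¬ (3:ℤ) ≤ 1),
        Finset.prod_range_one]
      have hkey : ∀ c : ℤ, 0 ≤ c → c < 4 →
          P (T ⁻¹' EX 0 (fun i => w (i+1)) ∩ Bset c) = 4⁻¹ :=
        fun c h0 h3 => by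
          rw [key h0 h3 (measurableSet_EX 0 _), EX_zero, measure_univ, mul_one]
      rcases eq_or_ne (w 0) 1 with hw | hw
      · rw [if_pos hw, if_pos hw, if_neg (by rw [hw]; norm_num),
          if_neg (by rw [hw]; norm_num)]
        rw [hkey 0 (by norm_num) (by norm_num), hkey 1 (by norm_num) (by norm_num),
          measure_empty, hw, radLaw_singleton]
        simp only [if_true]
        rw [add_zero, add_zero, inv4_add_inv4]
      · rcases eq_or_ne (w 0) (-1) with hw' | hw'
        · rw [if_neg hw, if_neg hw, if_pos hw', if_pos hw']
          rw [P_Bset (by norm_num) (by norm_num), P_Bset (by norm_num) (by norm_num),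
            measure_empty, hw', radLaw_singleton]
          norm_num
          exact inv4_add_inv4
        · rw [if_neg hw, if_neg hw, if_neg hw', if_neg hw']
          rw [radLaw_singleton, if_neg hw, if_neg hw']
          simp
    | (m+2) =>
      rw [split4 (measurableSet_EX (m+2) w),
        setX_low (by norm_num : (0:ℤ) ≤ 1), setX_low (by norm_num : (1:ℤ) ≤ 1),
        setX_high2, setX_high3,
        Finset.prod_range_succ' (fun i => radLaw {w i}) (m+1)]
      have hkey1 : ∀ c : ℤ, 0 ≤ c → c < 4 →
          P (T ⁻¹' EX (m+1) (fun i => w (i+1)) ∩ Bset c)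
            = 4⁻¹ * ∏ i ∈ Finset.range (m+1), radLaw {w (i+1)} :=
        fun c h0 h3 => by rw [key h0 h3 (measurableSet_EX (m+1) _), IH (m+1) (by omega)]
      have hkey2 : ∀ c : ℤ, 0 ≤ c → c < 4 →
          P (T ⁻¹' EX m (fun i => w (i+2)) ∩ Bset c)
            = 4⁻¹ * ∏ i ∈ Finset.range m, radLaw {w (i+2)} :=
        fun c h0 h3 => by rw [key h0 h3 (measurableSet_EX m _), IH m (by omega)]
      have hprodsucc : ∏ i ∈ Finset.range (m+1), radLaw {w (i+1)}
          = (∏ i ∈ Finset.range m, radLaw {w (i+2)}) * radLaw {w 1} := by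
        rw [Finset.prod_range_succ' (fun i => radLaw {w (i+1)}) m]
      rcases eq_or_ne (w 0) 1 with hw | hw
      · rw [if_pos hw, if_pos hw, if_neg (fun h => by rw [hw] at h; exact absurd h.1 (by norm_num)),
          if_neg (fun h => by rw [hw] at h; exact absurd h.1 (by norm_num))]
        rw [hkey1 0 (by norm_num) (by norm_num), hkey1 1 (by norm_num) (by norm_num),
          measure_empty, hw, radLaw_singleton]
        simp only [if_true]
        rw [add_zero, add_zero, ← add_mul, inv4_add_inv4, mul_comm]
      · rcases eq_or_ne (w 0) (-1) with hw0 | hw0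
        · rcases eq_or_ne (w 1) 1 with hw1 | hw1
          · rw [if_neg hw, if_neg hw, if_pos ⟨hw0, hw1⟩,
              if_neg (fun h => by rw [hw1] at h; exact absurd h.2 (by norm_num))]
            rw [hkey2 2 (by norm_num) (by norm_num), measure_empty, hprodsucc,
              hw0, hw1, radLaw_singleton, radLaw_singleton]
            norm_num
            rw [mul_assoc, inv2_mul_inv2, mul_comm]
          · rcases eq_or_ne (w 1) (-1) with hw1' | hw1'
            · rw [if_neg hw, if_neg hw, if_neg (fun h => hw1 h.2), if_pos ⟨hw0, hw1'⟩]
              rw [hkey2 3 (by norm_num) (by norm_num), measure_empty, hprodsucc,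
                hw0, hw1', radLaw_singleton]
              norm_num
              rw [mul_assoc, inv2_mul_inv2, mul_comm]
            · rw [if_neg hw, if_neg hw, if_neg (fun h => hw1 h.2), if_neg (fun h => hw1' h.2)]
              rw [hprodsucc, radLaw_singleton (w 1), if_neg hw1, if_neg hw1']
              simp
        · rw [if_neg hw, if_neg hw, if_neg (fun h => hw0 h.1), if_neg (fun h => hw0 h.1)]
          rw [radLaw_singleton (w 0), if_neg hw, if_neg hw0]
          simp

section Generic

variable {μ : Measure ℝ} [IsProbabilityMeasure μ] {ν : Measure ℤ} [IsProbabilityMeasure ν]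

lemma singleton_pi {n : ℕ} (v : Fin n → ℤ) :
    ({v} : Set (Fin n → ℤ)) = Set.pi Set.univ (fun i => {v i}) := by
  ext u
  simp [funext_iff, Set.mem_pi]

lemma map_prefix_eq_pi (Z : ℕ → ℝ → ℤ) (hZ : ∀ n, Measurable (Z n))
    (h : ∀ (n : ℕ) (w : ℕ → ℤ), μ {x | ∀ i < n, Z i x = w i} = ∏ i ∈ Finset.range n, ν {w i}) (n : ℕ) :
    Measure.map (fun x (i : Fin n) => Z i x) μ = Measure.pi (fun _ => ν) := by
  refine Measure.ext_of_singleton (fun v => ?_)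
  have hmeas : Measurable (fun x (i : Fin n) => Z i x) :=
    measurable_pi_lambda _ (fun i => hZ i)
  have hsing : MeasurableSet ({v} : Set (Fin n → ℤ)) := by
    rw [singleton_pi v]
    exact MeasurableSet.univ_pi (fun i => trivial)
  rw [Measure.map_apply hmeas hsing]
  set w : ℕ → ℤ := fun i => if hi : i < n then v ⟨i, hi⟩ else 0 with hw
  have hpre : (fun x (i : Fin n) => Z i x) ⁻¹' {v} = {x | ∀ i < n, Z i x = w i} := by
    ext x
    simp only [Set.mem_preimage, Set.mem_singleton_iff, funext_iff, Set.mem_setOf_eq]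
    constructor
    · intro hv i hi
      have := hv ⟨i, hi⟩
      simpa [hw, hi] using this
    · intro hv i
      have := hv i.val i.isLt
      simpa [hw, i.isLt] using this
  rw [hpre, h n w, singleton_pi v, Measure.pi_pi,
    ← Fin.prod_univ_eq_prod_range (fun i => ν {w i}) n]
  refine Finset.prod_congr rfl (fun i _ => ?_)
  simp [hw, i.isLt]

lemma cylinder (Z : ℕ → ℝ → ℤ) (hZ : ∀ n, Measurable (Z n))
    (h : ∀ (n : ℕ) (w : ℕ → ℤ), μ {x | ∀ i < n, Z i x = w i} = ∏ i ∈ Finset.range n, ν {w i})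
    (S : Finset ℕ) (sets : ℕ → Set ℤ) :
    μ (⋂ i ∈ S, Z i ⁻¹' sets i) = ∏ i ∈ S, ν (sets i) := by
  set n := S.sup Nat.succ with hn
  have hlt : ∀ i ∈ S, i < n := fun i hi => Nat.lt_of_succ_le (Finset.le_sup (f := Nat.succ) hi)
  set C : Set (Fin n → ℤ) := Set.pi Set.univ (fun j => if (j:ℕ) ∈ S then sets (j:ℕ) else Set.univ)
    with hCdef
  have hC : MeasurableSet C := MeasurableSet.univ_pi fun j => trivial
  have hmeas : Measurable (fun x (i : Fin n) => Z i x) :=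
    measurable_pi_lambda _ (fun i => hZ i)
  have hpre : (fun x (j : Fin n) => Z (j:ℕ) x) ⁻¹' C = ⋂ i ∈ S, Z i ⁻¹' sets i := by
    ext x
    simp only [Set.mem_preimage, hCdef, Set.mem_pi, Set.mem_univ, forall_true_left,
      Set.mem_iInter]
    constructor
    · intro hj i hiS
      have := hj ⟨i, hlt i hiS⟩
      rwa [if_pos hiS] at this
    · intro hR j
      by_cases hj : (j:ℕ) ∈ S
      · rw [if_pos hj]; exact hR _ hj
      · rw [if_neg hj]; exact Set.mem_univ _
  rw [← hpre, ← Measure.map_apply hmeas hC, map_prefix_eq_pi Z hZ h n, Measure.pi_pi]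
  have h1 : ∀ j : Fin n, ν (if (j:ℕ) ∈ S then sets (j:ℕ) else Set.univ)
      = (fun i : ℕ => if i ∈ S then ν (sets i) else 1) (j:ℕ) := by
    intro j
    by_cases hj : (j:ℕ) ∈ S <;> simp [hj]
  rw [Finset.prod_congr rfl (fun j _ => h1 j),
    Fin.prod_univ_eq_prod_range (fun i => if i ∈ S then ν (sets i) else 1) n,
    ← Finset.prod_filter]
  refine Finset.prod_congr ?_ (fun _ _ => rfl)
  ext i
  simp only [Finset.mem_filter, Finset.mem_range]
  exact ⟨fun h => h.2, fun h => ⟨hlt i h, h⟩⟩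

lemma marginal (Z : ℕ → ℝ → ℤ) (hZ : ∀ n, Measurable (Z n))
    (h : ∀ (n : ℕ) (w : ℕ → ℤ), μ {x | ∀ i < n, Z i x = w i} = ∏ i ∈ Finset.range n, ν {w i}) (i : ℕ) :
    Measure.map (Z i) μ = ν := by
  refine Measure.ext (fun E hE => ?_)
  rw [Measure.map_apply (hZ i) hE]
  have := cylinder Z hZ h {i} (fun _ => E)
  simpa using this

lemma indep_of_prefix_law (Z : ℕ → ℝ → ℤ) (hZ : ∀ n, Measurable (Z n))
    (h : ∀ (n : ℕ) (w : ℕ → ℤ), μ {x | ∀ i < n, Z i x = w i} = ∏ i ∈ Finset.range n, ν {w i}) :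
    iIndepFun Z μ := by
  rw [iIndepFun_iff_measure_inter_preimage_eq_mul]
  intro S sets hsets
  rw [cylinder Z hZ h S sets]
  refine Finset.prod_congr rfl (fun i hi => ?_)
  have := cylinder Z hZ h {i} sets
  simp only [Finset.mem_singleton, Set.iInter_iInter_eq_left, Finset.prod_singleton] at this
  rw [this]

end Generic

def len (c : ℤ) : ℕ := if c ≤ 1 then 1 else 2

noncomputable def start (t : ℕ) (x : ℝ) : ℕ := ∑ i ∈ Finset.range t, len (dig (T^[i] x))

lemma start_zero (x : ℝ) : start 0 x = 0 := by simp [start]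

lemma start_succ (t : ℕ) (x : ℝ) : start (t+1) x = len (dig x) + start t (T x) := by
  rw [start, Finset.sum_range_succ' (fun i => len (dig (T^[i] x))) t]
  simp only [Function.iterate_succ_apply, Function.iterate_zero_apply]
  rw [add_comm]
  rfl

lemma blockSum : ∀ (t : ℕ) (x : ℝ),
    ∑ i ∈ Finset.range (start t x), Xf i x ≤ ∑ j ∈ Finset.range t, Yf j x := by
  intro t
  induction t with
  | zero => intro x; simp [start_zero]
  | succ t IH =>
    intro x
    rw [start_succ]
    have hY : ∑ j ∈ Finset.range (t+1), Yf j x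
        = (∑ j ∈ Finset.range t, Yf j (T x)) + Yf 0 x := by
      rw [Finset.sum_range_succ' (fun j => Yf j x) t]
      simp only [yfsucc]
    rw [hY]
    by_cases hd : dig x ≤ 1
    · rw [show len (dig x) = 1 from if_pos hd, add_comm 1 (start t (T x)),
        Finset.sum_range_succ' (fun i => Xf i x) (start t (T x))]
      have h1 : ∀ i, Xf (i+1) x = Xf i (T x) := xfsucc_low hd
      simp only [h1, xf0_low hd]
      have hY0 : Yf 0 x = 1 := by
        rw [yf0, if_neg (by omega)]
      rw [hY0]
      exact add_le_add (IH (T x)) le_rfl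
    · rw [show len (dig x) = 2 from if_neg hd, add_comm 2 (start t (T x))]
      rw [Finset.sum_range_succ' (fun i => Xf i x) (start t (T x) + 1),
        Finset.sum_range_succ' (fun i => Xf (i+1) x) (start t (T x))]
      have h2 : ∀ i, Xf (i+1+1) x = Xf i (T x) := fun i => xfsucc2_high hd i
      simp only [h2, xf0_high hd, xf1_high hd]
      rw [add_assoc]
      refine add_le_add (IH (T x)) ?_
      rw [yf0]
      split_ifs <;> omega

lemma block_end : ∀ (s : ℕ) (x : ℝ), Xf s x = 1 → ∃ t, t ≤ s ∧ start (t+1) x = s + 1 := by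
  intro s
  induction s using Nat.strong_induction_on with
  | _ s IH =>
    intro x hXs
    by_cases hd : dig x ≤ 1
    · match s with
      | 0 =>
        exact ⟨0, le_refl 0, by rw [start_succ, start_zero, show len (dig x) = 1 from if_pos hd]⟩
      | (m+1) =>
        rw [xfsucc_low hd] at hXs
        obtain ⟨t, ht, hstart⟩ := IH m (by omega) (T x) hXs
        refine ⟨t+1, by omega, ?_⟩
        rw [start_succ, hstart, show len (dig x) = 1 from if_pos hd]
        omega
    · match s with
      | 0 => rw [xf0_high hd] at hXs; omega
      | 1 =>
        exact ⟨0, Nat.zero_le 1, by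
          rw [start_succ, start_zero, show len (dig x) = 2 from if_neg hd]⟩
      | (m+2) =>
        rw [xfsucc2_high hd] at hXs
        obtain ⟨t, ht, hstart⟩ := IH m (by omega) (T x) hXs
        refine ⟨t+1, by omega, ?_⟩
        rw [start_succ, hstart, show len (dig x) = 2 from if_neg hd]
        omega

lemma hit (x : ℝ) (k : ℤ) (hk : 1 ≤ k) :
    hitTime (fun t => Yf t x) k ≤ hitTime (fun s => Xf s x) k := by
  rw [hitTime, hitTime]
  refine le_sInf ?_
  rintro b ⟨s₀, hs₀, rfl⟩
  simp only [Set.mem_setOf_eq] at hs₀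
  have hex : ∃ s, k ≤ ∑ i ∈ Finset.range (s+1), Xf i x := ⟨s₀, hs₀⟩
  obtain ⟨s, hQs, hmin, hle⟩ : ∃ s, (k ≤ ∑ i ∈ Finset.range (s+1), Xf i x) ∧
      (∀ m < s, ¬ (k ≤ ∑ i ∈ Finset.range (m+1), Xf i x)) ∧ s ≤ s₀ :=
    ⟨Nat.find hex, Nat.find_spec hex, fun m hm => Nat.find_min hex hm, Nat.find_min' hex hs₀⟩
  have hXs : Xf s x = 1 := by
    rcases xf_values s x with h1 | h1
    · exact h1
    · exfalso
      match s, hQs, hmin, h1 with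
      | 0, hQs, _, h1 =>
        rw [Finset.sum_range_one, h1] at hQs
        omega
      | (m+1), hQs, hmin, h1 =>
        have hnot := hmin m (Nat.lt_succ_self m)
        rw [Finset.sum_range_succ, h1] at hQs
        omega
  obtain ⟨t, hts, hstart⟩ := block_end s x hXs
  have hY : k ≤ ∑ j ∈ Finset.range (t+1), Yf j x := by
    calc k ≤ ∑ i ∈ Finset.range (s+1), Xf i x := hQs
    _ = ∑ i ∈ Finset.range (start (t+1) x), Xf i x := by rw [hstart]
    _ ≤ ∑ j ∈ Finset.range (t+1), Yf j x := blockSum (t+1) x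
  refine le_trans (sInf_le ⟨t, hY, rfl⟩) ?_
  exact_mod_cast Nat.cast_le.mpr (le_trans hts hle)

end Stmt5Aux

/-- There is a coupling of an i.i.d. Rademacher walk X and an i.i.d. walk Y
(+1 w.p. 3/4, −2 w.p. 1/4) under which, for every level k ≥ 1, the Y-walk
reaches k no later than the X-walk: the hitting time of Y is stochastically
dominated by that of X. -/
theorem stmt5 : ∃ (Ω : Type) (_ : MeasureSpace Ω)
    (_ : IsProbabilityMeasure (ℙ : Measure Ω)) (X Y : ℕ → Ω → ℤ),
    iIndepFun X ℙ ∧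
    iIndepFun Y ℙ ∧
    (∀ s, Measure.map (X s) ℙ = radLaw) ∧
    (∀ t, Measure.map (Y t) ℙ = yLaw) ∧
    (∀ ω, ∀ k : ℤ, 1 ≤ k →
      hitTime (fun t => Y t ω) k ≤ hitTime (fun s => X s ω) k) := by
  refine ⟨ℝ, ⟨Stmt5Aux.P⟩, inferInstanceAs (IsProbabilityMeasure Stmt5Aux.P),
    Stmt5Aux.Xf, Stmt5Aux.Yf, ?_, ?_, ?_, ?_, ?_⟩
  · exact Stmt5Aux.indep_of_prefix_law (μ := Stmt5Aux.P) Stmt5Aux.Xf Stmt5Aux.measurable_Xf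
      (fun n w => Stmt5Aux.prefix_law_X n w)
  · exact Stmt5Aux.indep_of_prefix_law (μ := Stmt5Aux.P) Stmt5Aux.Yf Stmt5Aux.measurable_Yf
      (fun n w => Stmt5Aux.prefix_law_Y n w)
  · exact fun s => Stmt5Aux.marginal Stmt5Aux.Xf Stmt5Aux.measurable_Xf
      (fun n w => Stmt5Aux.prefix_law_X n w) s
  · exact fun t => Stmt5Aux.marginal Stmt5Aux.Yf Stmt5Aux.measurable_Yf
      (fun n w => Stmt5Aux.prefix_law_Y n w) t
  · exact fun x k hk => Stmt5Aux.hit x k hk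
end

section
/- Two providers a, b occupy points x, y respectively with skills satisfying s_{a,y} > s_{a,x}, s_{a,y} > s_{b,y}, s_{b,x} > s_{b,y}, s_{b,x} > s_{a,x}. Suppose the optimal matching allocates total affinity A > 0 to each of x and y, with user utility equal to (allocated affinity)·(skill of the serving provider). Then: (i) the swapped configuration (a at y, b at x) yields strictly greater social welfare A·(s_{a,y} + s_{b,x}) > A·(s_{a,x} + s_{b,y}) than the current configuration; (ii) any sequence of single-provider moves from the current to the swapped configuration must pass through an intermediate configuration in which both providers occupy the same point, whose social welfare is at most A·max(s_{a,y}, s_{b,x}, s_{a,x}, s_{b,y}) + A·(second provider's skill at the shared point) and is strictly less than the swapped configuration's welfare whenever the shared-point skills are strictly smaller than s_{a,y} and s_{b,x} respectively. -/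
/-! With only two points, two providers at distinct points that move one at a time collide
after the very first move: the mover can only go to the other point, which is occupied.
So the welfare-improving swap cannot be reached by greedy single-provider moves without
passing through a shared point, whose welfare falls short of the swapped one. -/

lemma Bool.eq_of_single_move {p q p' q' : Bool} (hpq : p ≠ q)
    (hmove : (p' = p ∧ q' ≠ q) ∨ (p' ≠ p ∧ q' = q)) : p' = q' := by
  cases p <;> cases q <;> cases p' <;> cases q' <;> simp_all

lemma exists_shared_of_single_moves {n : ℕ} {c : ℕ → Fin 2 → Bool}
    (hstart : c 0 0 ≠ c 0 1) (hn : n ≠ 0)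
    (hstep : ∀ t < n, (c (t+1) 0 = c t 0 ∧ c (t+1) 1 ≠ c t 1) ∨
      (c (t+1) 0 ≠ c t 0 ∧ c (t+1) 1 = c t 1)) :
    ∃ t ≤ n, c t 0 = c t 1 :=
  ⟨1, Nat.one_le_iff_ne_zero.mpr hn,
    Bool.eq_of_single_move hstart (hstep 0 (Nat.pos_of_ne_zero hn))⟩

theorem stmt13_general (A say sax sby sbx : ℝ) (hA : 0 < A)
    (h1 : say > sax) (h3 : sbx > sby)
    (skill : Fin 2 → Bool → ℝ)
    (hskax : skill 0 false = sax) (hskay : skill 0 true = say) :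
    (A * (say + sbx) > A * (sax + sby)) ∧
    (∀ (n : ℕ) (c : ℕ → Fin 2 → Bool),
      (c 0 0 = false ∧ c 0 1 = true) →
      (c n 0 = true ∧ c n 1 = false) →
      (∀ t < n, (c (t+1) 0 = c t 0 ∧ c (t+1) 1 ≠ c t 1) ∨
                (c (t+1) 0 ≠ c t 0 ∧ c (t+1) 1 = c t 1)) →
      ∃ t ≤ n, c t 0 = c t 1) ∧
    (∀ z : Bool, A * (skill 0 z + skill 1 z) ≤
      A * max (max say sbx) (max sax sby) + A * skill 1 z) ∧
    (∀ z : Bool, skill 0 z < say → skill 1 z < sbx →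
      A * (skill 0 z + skill 1 z) < A * (say + sbx)) := by
  refine ⟨mul_lt_mul_of_pos_left (add_lt_add h1 h3) hA, ?_, ?_, ?_⟩
  · rintro n c ⟨h00, h01⟩ ⟨hn0, -⟩ hstep
    refine exists_shared_of_single_moves (by simp [h00, h01]) ?_ hstep
    rintro rfl
    simp [h00] at hn0
  · intro z
    have hskill : skill 0 z ≤ max (max say sbx) (max sax sby) := by
      cases z <;> simp [hskax, hskay]
    rw [mul_add]
    exact add_le_add_left (mul_le_mul_of_nonneg_left hskill hA.le) _
  · intro z ha hb
    exact mul_lt_mul_of_pos_left (add_lt_add ha hb) hA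

/-- Two-provider swap counterexample: the swapped configuration strictly improves
welfare, but any single-provider-at-a-time move sequence passes through a shared
location, whose welfare is bounded and strictly worse than the swapped welfare. -/
theorem stmt13 (A say sax sby sbx : ℝ) (hA : 0 < A)
    (h1 : say > sax) (h2 : say > sby) (h3 : sbx > sby) (h4 : sbx > sax)
    (skill : Fin 2 → Bool → ℝ)
    (hskax : skill 0 false = sax) (hskay : skill 0 true = say)
    (hskbx : skill 1 false = sbx) (hskby : skill 1 true = sby) :
    (A * (say + sbx) > A * (sax + sby)) ∧
    (∀ (n : ℕ) (c : ℕ → Fin 2 → Bool),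
      (c 0 0 = false ∧ c 0 1 = true) →
      (c n 0 = true ∧ c n 1 = false) →
      (∀ t < n, (c (t+1) 0 = c t 0 ∧ c (t+1) 1 ≠ c t 1) ∨
                (c (t+1) 0 ≠ c t 0 ∧ c (t+1) 1 = c t 1)) →
      ∃ t ≤ n, c t 0 = c t 1) ∧
    (∀ z : Bool, A * (skill 0 z + skill 1 z) ≤
      A * max (max say sbx) (max sax sby) + A * skill 1 z) ∧
    (∀ z : Bool, skill 0 z < say → skill 1 z < sbx →
      A * (skill 0 z + skill 1 z) < A * (say + sbx)) :=
  stmt13_general A say sax sby sbx hA h1 h3 skill hskax hskay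
end
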